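/- Let G=(V,E) be a finite connected simple graph with girth at least 6, let κ*:E→ℝ, and let ω:[0,∞)→ℝ^E be a solution of the prescribed-curvature Ricci flow with positive initial value. Write κ_i(t) = κ_{e_i}(ω(t)) and g(t) = Σ_{e_i∈E} (κ_i(t) − κ*_i)². Then g is differentiable with g'(t) = −Σ_{e_i∈E} Σ_{e_j∼e_i} C_{ij}(t)·[(κ_j(t)−κ*_j) − (κ_i(t)−κ*_i)]² ≤ 0, where e_j∼e_i means e_j ≠ e_i shares a vertex with e_i, and C_{ij}(t) = 2ω_i(t)ω_j(t)/m(u)² with u the common vertex of e_i and e_j. In particular, t ↦ Σ_{e∈E}(κ_e(ω(t)) − κ*_e)² is nonincreasing along the flow. -/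

import Mathlib

open Finset

variable {V : Type*} [Fintype V] [DecidableEq V]

/-- The weighted vertex measure `m(x) = Σ_{y ∼ x} ω_{xy}`. -/
noncomputable def vm (G : SimpleGraph V) [DecidableRel G.Adj] (w : Sym2 V → ℝ) (x : V) : ℝ :=
  ∑ y ∈ G.neighborFinset x, w s(x, y)

/-- The Lin–Lu–Yau curvature of an edge `e = {x,y}` on a graph of girth ≥ 6, given by the
explicit formula `κ_e(ω) = 2·ω_e·(1/m(x) + 1/m(y)) − 2`. -/
noncomputable def edgeKappa (G : SimpleGraph V) [DecidableRel G.Adj] (w : Sym2 V → ℝ) :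
    Sym2 V → ℝ :=
  Sym2.lift ⟨fun x y => 2 * w s(x, y) * (1 / vm G w x + 1 / vm G w y) - 2, by
    intro x y
    dsimp only
    rw [Sym2.eq_swap]
    ring⟩

set_option linter.unusedSectionVars false

section Aux
variable (G : SimpleGraph V) [DecidableRel G.Adj]

lemma edgeKappa_mk (w : Sym2 V → ℝ) (x y : V) :
    edgeKappa G w s(x,y) = 2 * w s(x,y) * (1 / vm G w x + 1 / vm G w y) - 2 := rfl

lemma mem_ef {x y : V} (h : G.Adj x y) : s(x,y) ∈ G.edgeFinset := by
  rw [SimpleGraph.mem_edgeFinset, SimpleGraph.mem_edgeSet]; exact h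

lemma vm_pos (w : Sym2 V → ℝ) (hw : ∀ e ∈ G.edgeFinset, 0 < w e) {x y : V}
    (hxy : G.Adj x y) : 0 < vm G w x := by
  apply Finset.sum_pos
  · intro z hz
    rw [SimpleGraph.mem_neighborFinset] at hz
    exact hw _ (mem_ef G hz)
  · exact ⟨y, by rwa [SimpleGraph.mem_neighborFinset]⟩

lemma filter_single {x y z : V} (hzy : z ≠ y) :
    Finset.univ.filter (fun u => u ∈ s(x,y) ∧ u ∈ s(x,z)) = {x} := by
  ext u
  simp only [Finset.mem_filter, Finset.mem_univ, true_and, Sym2.mem_iff, Finset.mem_singleton]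
  constructor
  · rintro ⟨hx | hy, hx' | hz⟩ <;> first | assumption | (subst hy; subst hz; exact absurd rfl (Ne.symm hzy)) | (subst hy; assumption)
  · rintro rfl; exact ⟨Or.inl rfl, Or.inl rfl⟩

lemma adj_decomp {x y : V} (hxy : G.Adj x y) :
    G.edgeFinset.filter (fun f => f ≠ s(x,y) ∧ ∃ u : V, u ∈ f ∧ u ∈ s(x,y)) =
      ((G.neighborFinset x).erase y).image (fun z => s(x,z)) ∪
      ((G.neighborFinset y).erase x).image (fun z => s(y,z)) := by
  ext f
  simp only [Finset.mem_filter, Finset.mem_union, Finset.mem_image, Finset.mem_erase,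
    SimpleGraph.mem_neighborFinset, SimpleGraph.mem_edgeFinset, SimpleGraph.mem_edgeSet]
  constructor
  · rintro ⟨hf, hne, u, huf, hue⟩
    rw [Sym2.mem_iff] at hue
    rcases hue with rfl | rfl
    · -- u = x
      rw [Sym2.mem_iff_exists] at huf
      obtain ⟨z, rfl⟩ := huf
      left
      refine ⟨z, ⟨fun hz => hne (by rw [hz]), ?_⟩, rfl⟩
      · rwa [SimpleGraph.mem_edgeSet] at hf
    · rw [Sym2.mem_iff_exists] at huf
      obtain ⟨z, rfl⟩ := huf
      right
      refine ⟨z, ⟨fun hz => hne (by rw [hz, Sym2.eq_swap]), ?_⟩, rfl⟩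
      · rwa [SimpleGraph.mem_edgeSet] at hf
  · rintro (⟨z, ⟨hzy, hz⟩, rfl⟩ | ⟨z, ⟨hzx, hz⟩, rfl⟩)
    · exact ⟨(SimpleGraph.mem_edgeSet G).mpr hz,
        fun h => hzy (Sym2.congr_right.mp h), x, Sym2.mem_mk_left x z, Sym2.mem_mk_left x y⟩
    · exact ⟨(SimpleGraph.mem_edgeSet G).mpr hz,
        fun h => hzx (Sym2.congr_right.mp (h.trans (Sym2.eq_swap))), y, Sym2.mem_mk_left y z, Sym2.mem_mk_right x y⟩

lemma filter_single' {x y z : V} (hzx : z ≠ x) :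
    Finset.univ.filter (fun u => u ∈ s(x,y) ∧ u ∈ s(y,z)) = {y} := by
  ext u
  simp only [Finset.mem_filter, Finset.mem_univ, true_and, Sym2.mem_iff, Finset.mem_singleton]
  constructor
  · rintro ⟨hx | hy, hy' | hz⟩
    · subst hx; subst hy'; rfl
    · subst hx; exact absurd hz.symm hzx
    · assumption
    · assumption
  · rintro rfl; exact ⟨Or.inr rfl, Or.inl rfl⟩

lemma alg_identity (We de mx my Px Py : ℝ) (hmx : mx ≠ 0) (hmy : my ≠ 0) :
    ((2 * We / mx ^ 2) * Px - (2 * We * de / mx ^ 2) * mx)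
      + ((2 * We / my ^ 2) * Py - (2 * We * de / my ^ 2) * my)
    = 2 * (-de * We) * (mx⁻¹ + my⁻¹)
      + 2 * We * (-(-Px) / mx ^ 2 + -(-Py) / my ^ 2) := by
  field_simp
  ring

lemma kappa_deriv (κs : Sym2 V → ℝ) (ω : ℝ → Sym2 V → ℝ) (t : ℝ)
    (hpos : ∀ e ∈ G.edgeFinset, 0 < ω t e)
    (hflow : ∀ e ∈ G.edgeFinset,
      HasDerivWithinAt (fun s => ω s e) (-(edgeKappa G (ω t) e - κs e) * ω t e) (Set.Ici 0) t)
    {x y : V} (hxy : G.Adj x y) :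
    HasDerivWithinAt (fun s => edgeKappa G (ω s) s(x,y))
      (∑ f ∈ G.edgeFinset.filter (fun f => f ≠ s(x,y) ∧ ∃ u : V, u ∈ f ∧ u ∈ s(x,y)),
        (∑ u ∈ Finset.univ.filter (fun u => u ∈ s(x,y) ∧ u ∈ f),
            2 * ω t s(x,y) * ω t f / vm G (ω t) u ^ 2) *
          ((edgeKappa G (ω t) f - κs f) - (edgeKappa G (ω t) s(x,y) - κs s(x,y))))
      (Set.Ici 0) t := by
  have hmx : 0 < vm G (ω t) x := vm_pos G (ω t) hpos hxy
  have hmy : 0 < vm G (ω t) y := vm_pos G (ω t) hpos hxy.symm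
  set δ : Sym2 V → ℝ := fun f => edgeKappa G (ω t) f - κs f with hδ
  -- derivative of vm at x
  have hMx : HasDerivWithinAt (fun s => vm G (ω s) x)
      (∑ z ∈ G.neighborFinset x, -δ s(x,z) * ω t s(x,z)) (Set.Ici 0) t := by
    unfold vm
    exact HasDerivWithinAt.fun_sum fun z hz =>
      hflow _ (mem_ef G ((SimpleGraph.mem_neighborFinset G x z).mp hz))
  have hMy : HasDerivWithinAt (fun s => vm G (ω s) y)
      (∑ z ∈ G.neighborFinset y, -δ s(y,z) * ω t s(y,z)) (Set.Ici 0) t := by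
    unfold vm
    exact HasDerivWithinAt.fun_sum fun z hz =>
      hflow _ (mem_ef G ((SimpleGraph.mem_neighborFinset G y z).mp hz))
  have hE : s(x,y) ∈ G.edgeFinset := mem_ef G hxy
  have hD0 : HasDerivWithinAt (fun s => edgeKappa G (ω s) s(x,y))
      (2 * (-δ s(x,y) * ω t s(x,y)) * ((vm G (ω t) x)⁻¹ + (vm G (ω t) y)⁻¹)
        + 2 * ω t s(x,y) *
          (-(∑ z ∈ G.neighborFinset x, -δ s(x,z) * ω t s(x,z)) / vm G (ω t) x ^ 2
            + -(∑ z ∈ G.neighborFinset y, -δ s(y,z) * ω t s(y,z)) / vm G (ω t) y ^ 2))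
      (Set.Ici 0) t := by
    have hfe : (fun s => edgeKappa G (ω s) s(x,y))
        = fun s => 2 * ω s s(x,y) * ((vm G (ω s) x)⁻¹ + (vm G (ω s) y)⁻¹) - 2 := by
      funext s
      rw [edgeKappa_mk, one_div, one_div]
    rw [hfe]
    exact (((hflow _ hE).const_mul 2).mul
      ((hMx.inv hmx.ne').add (hMy.inv hmy.ne'))).sub_const 2
  convert hD0 using 1
  -- reindex the sum over adjacent edges
  rw [adj_decomp G hxy]
  have hdisj : Disjoint (((G.neighborFinset x).erase y).image (fun z => s(x,z)))
      (((G.neighborFinset y).erase x).image (fun z => s(y,z))) := by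
    rw [Finset.disjoint_left]
    rintro f hf1 hf2
    obtain ⟨z1, hz1, rfl⟩ := Finset.mem_image.mp hf1
    obtain ⟨z2, hz2, h⟩ := Finset.mem_image.mp hf2
    rw [Sym2.eq, Sym2.rel_iff', Prod.mk.injEq, Prod.swap_prod_mk, Prod.mk.injEq] at h
    rcases h with ⟨h1, h2⟩ | ⟨h1, h2⟩
    · exact hxy.ne h1.symm
    · exact (Finset.ne_of_mem_erase hz2) h2
  rw [Finset.sum_union hdisj,
    Finset.sum_image (fun z1 _ z2 _ h => Sym2.congr_right.mp h),
    Finset.sum_image (fun z1 _ z2 _ h => Sym2.congr_right.mp h)]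
  have hxside : ∀ z ∈ (G.neighborFinset x).erase y,
      (∑ u ∈ Finset.univ.filter (fun u => u ∈ s(x,y) ∧ u ∈ s(x,z)),
          2 * ω t s(x,y) * ω t s(x,z) / vm G (ω t) u ^ 2) * (δ s(x,z) - δ s(x,y))
      = 2 * ω t s(x,y) * ω t s(x,z) / vm G (ω t) x ^ 2 * (δ s(x,z) - δ s(x,y)) := by
    intro z hz
    rw [filter_single (Finset.ne_of_mem_erase hz), Finset.sum_singleton]
  have hyside : ∀ z ∈ (G.neighborFinset y).erase x,
      (∑ u ∈ Finset.univ.filter (fun u => u ∈ s(x,y) ∧ u ∈ s(y,z)),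
          2 * ω t s(x,y) * ω t s(y,z) / vm G (ω t) u ^ 2) * (δ s(y,z) - δ s(x,y))
      = 2 * ω t s(x,y) * ω t s(y,z) / vm G (ω t) y ^ 2 * (δ s(y,z) - δ s(x,y)) := by
    intro z hz
    rw [filter_single' (Finset.ne_of_mem_erase hz), Finset.sum_singleton]
  rw [Finset.sum_congr rfl hxside, Finset.sum_congr rfl hyside]
  -- extend erased sums to full neighbor sums (the erased terms vanish)
  have ex : ∑ z ∈ (G.neighborFinset x).erase y,
      2 * ω t s(x,y) * ω t s(x,z) / vm G (ω t) x ^ 2 * (δ s(x,z) - δ s(x,y))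
      = ∑ z ∈ G.neighborFinset x,
      2 * ω t s(x,y) * ω t s(x,z) / vm G (ω t) x ^ 2 * (δ s(x,z) - δ s(x,y)) :=
    Finset.sum_erase _ (by rw [sub_self, mul_zero])
  have ey : ∑ z ∈ (G.neighborFinset y).erase x,
      2 * ω t s(x,y) * ω t s(y,z) / vm G (ω t) y ^ 2 * (δ s(y,z) - δ s(x,y))
      = ∑ z ∈ G.neighborFinset y,
      2 * ω t s(x,y) * ω t s(y,z) / vm G (ω t) y ^ 2 * (δ s(y,z) - δ s(x,y)) :=
    Finset.sum_erase _ (by rw [show s(y,x) = s(x,y) from Sym2.eq_swap, sub_self, mul_zero])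
  rw [ex, ey]
  -- now pure algebra on the two sums
  have key : ∀ (u : V) (nb : V → Sym2 V),
      ∑ z ∈ G.neighborFinset u, 2 * ω t s(x,y) * ω t (nb z) / vm G (ω t) u ^ 2
          * (δ (nb z) - δ s(x,y))
      = (2 * ω t s(x,y) / vm G (ω t) u ^ 2) * (∑ z ∈ G.neighborFinset u, δ (nb z) * ω t (nb z))
        - (2 * ω t s(x,y) * δ s(x,y) / vm G (ω t) u ^ 2) * (∑ z ∈ G.neighborFinset u, ω t (nb z)) := by
    intro u nb
    calc ∑ z ∈ G.neighborFinset u, 2 * ω t s(x,y) * ω t (nb z) / vm G (ω t) u ^ 2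
          * (δ (nb z) - δ s(x,y))
        = ∑ z ∈ G.neighborFinset u,
            ((2 * ω t s(x,y) / vm G (ω t) u ^ 2) * (δ (nb z) * ω t (nb z))
              - (2 * ω t s(x,y) * δ s(x,y) / vm G (ω t) u ^ 2) * ω t (nb z)) :=
        Finset.sum_congr rfl fun z _ => by ring
      _ = _ := by rw [Finset.sum_sub_distrib, ← Finset.mul_sum, ← Finset.mul_sum]
  rw [key x (fun z => s(x,z)), key y (fun z => s(y,z))]
  have hvx : ∑ z ∈ G.neighborFinset x, ω t s(x,z) = vm G (ω t) x := rfl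
  have hvy : ∑ z ∈ G.neighborFinset y, ω t s(y,z) = vm G (ω t) y := rfl
  rw [hvx, hvy]
  have hnegx : ∑ z ∈ G.neighborFinset x, -δ s(x,z) * ω t s(x,z)
      = -(∑ z ∈ G.neighborFinset x, δ s(x,z) * ω t s(x,z)) := by
    rw [← Finset.sum_neg_distrib]; exact Finset.sum_congr rfl fun z _ => by ring
  have hnegy : ∑ z ∈ G.neighborFinset y, -δ s(y,z) * ω t s(y,z)
      = -(∑ z ∈ G.neighborFinset y, δ s(y,z) * ω t s(y,z)) := by
    rw [← Finset.sum_neg_distrib]; exact Finset.sum_congr rfl fun z _ => by ring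
  rw [hnegx, hnegy]
  exact alg_identity _ _ _ _ _ _ hmx.ne' hmy.ne'

lemma global_alg (E : Finset (Sym2 V)) (A : Sym2 V → Finset (Sym2 V))
    (c : Sym2 V → Sym2 V → ℝ) (δ : Sym2 V → ℝ)
    (hsymm : ∀ e f, c e f = c f e)
    (hcond : ∀ e f, (e ∈ E ∧ f ∈ A e) ↔ (f ∈ E ∧ e ∈ A f)) :
    ∑ e ∈ E, ∑ f ∈ A e, c e f * (2 * δ e * (δ f - δ e))
      = -∑ e ∈ E, ∑ f ∈ A e, c e f * (δ f - δ e) ^ 2 := by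
  have swap : ∑ e ∈ E, ∑ f ∈ A e, c e f * (2 * δ e * (δ f - δ e))
      = ∑ e ∈ E, ∑ f ∈ A e, c f e * (2 * δ f * (δ e - δ f)) :=
    Finset.sum_comm' fun e f => (hcond e f).trans and_comm
  have h2 : (∑ e ∈ E, ∑ f ∈ A e, c e f * (2 * δ e * (δ f - δ e)))
      + (∑ e ∈ E, ∑ f ∈ A e, c e f * (2 * δ e * (δ f - δ e)))
      = -2 * ∑ e ∈ E, ∑ f ∈ A e, c e f * (δ f - δ e) ^ 2 := by
    nth_rewrite 2 [swap]
    rw [← Finset.sum_add_distrib, Finset.mul_sum]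
    refine Finset.sum_congr rfl fun e _ => ?_
    rw [← Finset.sum_add_distrib, Finset.mul_sum]
    refine Finset.sum_congr rfl fun f _ => ?_
    rw [hsymm e f]
    ring
  linarith

end Aux

/-- Along the prescribed-curvature Ricci flow, `g(t) = Σ_i (κ_i(t) − κ*_i)²` is differentiable
with `g'(t) = −Σ_i Σ_{j∼i} C_{ij}·[(κ_j−κ*_j) − (κ_i−κ*_i)]² ≤ 0`, where
`C_{ij} = 2ω_iω_j/m(u)²` for edges sharing the vertex `u`; in particular `g` is nonincreasing
on `[0,∞)`. -/
theorem curvature_deficit_monotone (G : SimpleGraph V) [DecidableRel G.Adj]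
    (hconn : G.Connected) (hgirth : 6 ≤ G.egirth) (κs : Sym2 V → ℝ)
    (ω : ℝ → Sym2 V → ℝ)
    (hpos : ∀ t ≥ (0 : ℝ), ∀ e ∈ G.edgeFinset, 0 < ω t e)
    (hflow : ∀ t ≥ (0 : ℝ), ∀ e ∈ G.edgeFinset,
      HasDerivWithinAt (fun s => ω s e)
        (-(edgeKappa G (ω t) e - κs e) * ω t e) (Set.Ici 0) t) :
    (∀ t ≥ (0 : ℝ),
      HasDerivWithinAt (fun s => ∑ e ∈ G.edgeFinset, (edgeKappa G (ω s) e - κs e) ^ 2)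
        (-∑ e ∈ G.edgeFinset,
          ∑ f ∈ G.edgeFinset.filter (fun f => f ≠ e ∧ ∃ u : V, u ∈ f ∧ u ∈ e),
            (∑ u ∈ Finset.univ.filter (fun u => u ∈ e ∧ u ∈ f),
                2 * ω t e * ω t f / vm G (ω t) u ^ 2) *
              ((edgeKappa G (ω t) f - κs f) - (edgeKappa G (ω t) e - κs e)) ^ 2)
        (Set.Ici 0) t ∧
      -∑ e ∈ G.edgeFinset,
          ∑ f ∈ G.edgeFinset.filter (fun f => f ≠ e ∧ ∃ u : V, u ∈ f ∧ u ∈ e),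
            (∑ u ∈ Finset.univ.filter (fun u => u ∈ e ∧ u ∈ f),
                2 * ω t e * ω t f / vm G (ω t) u ^ 2) *
              ((edgeKappa G (ω t) f - κs f) - (edgeKappa G (ω t) e - κs e)) ^ 2 ≤ 0) ∧
    AntitoneOn (fun t => ∑ e ∈ G.edgeFinset, (edgeKappa G (ω t) e - κs e) ^ 2)
      (Set.Ici 0) := by
  have main : ∀ t ≥ (0:ℝ),
      HasDerivWithinAt (fun s => ∑ e ∈ G.edgeFinset, (edgeKappa G (ω s) e - κs e) ^ 2)
        (-∑ e ∈ G.edgeFinset,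
          ∑ f ∈ G.edgeFinset.filter (fun f => f ≠ e ∧ ∃ u : V, u ∈ f ∧ u ∈ e),
            (∑ u ∈ Finset.univ.filter (fun u => u ∈ e ∧ u ∈ f),
                2 * ω t e * ω t f / vm G (ω t) u ^ 2) *
              ((edgeKappa G (ω t) f - κs f) - (edgeKappa G (ω t) e - κs e)) ^ 2)
        (Set.Ici 0) t := by
    intro t ht
    have hg : HasDerivWithinAt
        (fun s => ∑ e ∈ G.edgeFinset, (edgeKappa G (ω s) e - κs e) ^ 2)
        (∑ e ∈ G.edgeFinset, ((2:ℕ):ℝ) * (edgeKappa G (ω t) e - κs e) ^ (2-1) *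
          (∑ f ∈ G.edgeFinset.filter (fun f => f ≠ e ∧ ∃ u : V, u ∈ f ∧ u ∈ e),
            (∑ u ∈ Finset.univ.filter (fun u => u ∈ e ∧ u ∈ f),
                2 * ω t e * ω t f / vm G (ω t) u ^ 2) *
              ((edgeKappa G (ω t) f - κs f) - (edgeKappa G (ω t) e - κs e))))
        (Set.Ici 0) t := by
      refine HasDerivWithinAt.fun_sum fun e he => ?_
      induction e using Sym2.ind with
      | _ x y =>
        have hxy : G.Adj x y := by rwa [SimpleGraph.mem_edgeFinset, SimpleGraph.mem_edgeSet] at he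
        exact ((kappa_deriv G κs ω t (hpos t ht) (hflow t ht) hxy).sub_const
          (κs s(x,y))).pow 2
    have heq : ∑ e ∈ G.edgeFinset, ((2:ℕ):ℝ) * (edgeKappa G (ω t) e - κs e) ^ (2-1) *
          (∑ f ∈ G.edgeFinset.filter (fun f => f ≠ e ∧ ∃ u : V, u ∈ f ∧ u ∈ e),
            (∑ u ∈ Finset.univ.filter (fun u => u ∈ e ∧ u ∈ f),
                2 * ω t e * ω t f / vm G (ω t) u ^ 2) *
              ((edgeKappa G (ω t) f - κs f) - (edgeKappa G (ω t) e - κs e)))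
        = -∑ e ∈ G.edgeFinset,
          ∑ f ∈ G.edgeFinset.filter (fun f => f ≠ e ∧ ∃ u : V, u ∈ f ∧ u ∈ e),
            (∑ u ∈ Finset.univ.filter (fun u => u ∈ e ∧ u ∈ f),
                2 * ω t e * ω t f / vm G (ω t) u ^ 2) *
              ((edgeKappa G (ω t) f - κs f) - (edgeKappa G (ω t) e - κs e)) ^ 2 := by
      rw [show ∑ e ∈ G.edgeFinset, ((2:ℕ):ℝ) * (edgeKappa G (ω t) e - κs e) ^ (2-1) *
          (∑ f ∈ G.edgeFinset.filter (fun f => f ≠ e ∧ ∃ u : V, u ∈ f ∧ u ∈ e),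
            (∑ u ∈ Finset.univ.filter (fun u => u ∈ e ∧ u ∈ f),
                2 * ω t e * ω t f / vm G (ω t) u ^ 2) *
              ((edgeKappa G (ω t) f - κs f) - (edgeKappa G (ω t) e - κs e)))
        = ∑ e ∈ G.edgeFinset,
          ∑ f ∈ G.edgeFinset.filter (fun f => f ≠ e ∧ ∃ u : V, u ∈ f ∧ u ∈ e),
            (∑ u ∈ Finset.univ.filter (fun u => u ∈ e ∧ u ∈ f),
                2 * ω t e * ω t f / vm G (ω t) u ^ 2) *
              (2 * (edgeKappa G (ω t) e - κs e) *
                ((edgeKappa G (ω t) f - κs f) - (edgeKappa G (ω t) e - κs e))) from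
        Finset.sum_congr rfl fun e _ => by
          rw [Finset.mul_sum]
          exact Finset.sum_congr rfl fun f _ => by push_cast; ring]
      refine global_alg G.edgeFinset _ _ _ ?_ ?_
      · intro e f
        have hfilter : Finset.univ.filter (fun u => u ∈ e ∧ u ∈ f)
            = Finset.univ.filter (fun u => u ∈ f ∧ u ∈ e) :=
          Finset.filter_congr fun u _ => and_comm
        rw [hfilter]
        exact Finset.sum_congr rfl fun u _ => by ring
      · intro e f
        simp only [Finset.mem_filter]
        constructor
        · rintro ⟨he, hf, hne, u, h1, h2⟩
          exact ⟨hf, he, hne.symm, u, h2, h1⟩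
        · rintro ⟨hf, he, hne, u, h1, h2⟩
          exact ⟨he, hf, hne.symm, u, h2, h1⟩
    rwa [heq] at hg
  have nonpos : ∀ t ≥ (0:ℝ),
      -∑ e ∈ G.edgeFinset,
          ∑ f ∈ G.edgeFinset.filter (fun f => f ≠ e ∧ ∃ u : V, u ∈ f ∧ u ∈ e),
            (∑ u ∈ Finset.univ.filter (fun u => u ∈ e ∧ u ∈ f),
                2 * ω t e * ω t f / vm G (ω t) u ^ 2) *
              ((edgeKappa G (ω t) f - κs f) - (edgeKappa G (ω t) e - κs e)) ^ 2 ≤ 0 := by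
    intro t ht
    rw [neg_nonpos]
    refine Finset.sum_nonneg fun e he => Finset.sum_nonneg fun f hf => mul_nonneg
      (Finset.sum_nonneg fun u _ => div_nonneg ?_ (sq_nonneg _)) (sq_nonneg _)
    have h1 := hpos t ht e he
    have h2 := hpos t ht f (Finset.mem_filter.mp hf).1
    positivity
  refine ⟨fun t ht => ⟨main t ht, nonpos t ht⟩, ?_⟩
  refine antitoneOn_of_deriv_nonpos (convex_Ici 0) ?_ ?_ ?_
  · intro t ht
    exact (main t ht).continuousWithinAt
  · intro t ht
    rw [interior_Ici] at ht
    exact (((main t (le_of_lt ht)).hasDerivAt (Ici_mem_nhds ht)).differentiableAt).differentiableWithinAt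
  · intro t ht
    rw [interior_Ici] at ht
    rw [((main t (le_of_lt ht)).hasDerivAt (Ici_mem_nhds ht)).deriv]
    exact nonpos t (le_of_lt ht)
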